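/- Let P = (D_A, D_B, Φ, B) be an MBSD instance with an arbitrary LTLf mapping specification Φ over Prop^A ∪ Prop^B and stop agent B. Let F_Φ = (2^{Prop^A ∪ Prop^B}, Q, q0, η, acc) be a DFA accepting exactly the finite nonempty words over 2^{Prop^A ∪ Prop^B} that satisfy Φ, and let G_P = (𝒜, Reach(g)) be the reachability game on the product arena: U = V = S × T × Q; u0 = (s0, t0, η(q0, λ^A(s0) ∪ λ^B(t0))); ((s,t,q),(s',t,q)) ∈ α iff (s,s') ∈ δ^A; ((s,t,q),(s,t',q')) ∈ β iff (t,t') ∈ δ^B and η(q, λ^A(s) ∪ λ^B(t')) = q'; g = {(s,t,q) ∈ U : q ∈ acc}. Then P has a solution if and only if Player 2 has a winning strategy in G_P. -/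

import Mathlib

/-! ### Boolean formulas -/

inductive BForm (P : Type) : Type
  | tt : BForm P
  | atom : P → BForm P
  | neg : BForm P → BForm P
  | conj : BForm P → BForm P → BForm P

namespace BForm

/-- Satisfaction of a Boolean formula by the set `X` of true propositions. -/
def sat {P : Type} (X : Set P) : BForm P → Prop
  | .tt => True
  | .atom p => p ∈ X
  | .neg φ => ¬ sat X φ
  | .conj φ ψ => sat X φ ∧ sat X ψ

def imp {P : Type} (φ ψ : BForm P) : BForm P := .neg (.conj φ (.neg ψ))

def map {P Q : Type} (f : P → Q) : BForm P → BForm Q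
  | .tt => .tt
  | .atom p => .atom (f p)
  | .neg φ => .neg (map f φ)
  | .conj φ ψ => .conj (map f φ) (map f ψ)

end BForm

/-! ### LTLf formulas and finite-word semantics -/

inductive LTLf (P : Type) : Type
  | tt : LTLf P
  | atom : P → LTLf P
  | neg : LTLf P → LTLf P
  | conj : LTLf P → LTLf P → LTLf P
  | next : LTLf P → LTLf P
  | untl : LTLf P → LTLf P → LTLf P

namespace LTLf

/-- Satisfaction on the finite word `π 0, …, π n` at position `i`. -/
def sat {P : Type} (π : ℕ → Set P) (n : ℕ) : ℕ → LTLf P → Prop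
  | _, .tt => True
  | i, .atom p => p ∈ π i
  | i, .neg φ => ¬ sat π n i φ
  | i, .conj φ ψ => sat π n i φ ∧ sat π n i ψ
  | i, .next φ => i + 1 ≤ n ∧ sat π n (i + 1) φ
  | i, .untl φ ψ => ∃ j, i ≤ j ∧ j ≤ n ∧ sat π n j ψ ∧ ∀ m, i ≤ m → m < j → sat π n m φ

def disj {P : Type} (φ ψ : LTLf P) : LTLf P := .neg (.conj (.neg φ) (.neg ψ))
def imp {P : Type} (φ ψ : LTLf P) : LTLf P := disj (.neg φ) ψ
def ev {P : Type} (φ : LTLf P) : LTLf P := .untl .tt φ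
def always {P : Type} (φ : LTLf P) : LTLf P := .neg (ev (.neg φ))
/-- Finite conjunction `⋀_{i=1}^k f i`. -/
def iconj {P : Type} {k : ℕ} (f : Fin k → LTLf P) : LTLf P :=
  ((List.finRange k).map f).foldr .conj .tt

end LTLf

def BForm.toLTLf {P : Type} : BForm P → LTLf P
  | .tt => .tt
  | .atom p => .atom p
  | .neg φ => .neg φ.toLTLf
  | .conj φ ψ => .conj φ.toLTLf ψ.toLTLf

/-! ### Dynamic domains, traces, strategies, solutions -/

structure DynDom (P S : Type) where
  init : S
  δ : S → S → Prop
  label : S → Set P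

/-- `τ 0 … τ n` is a (finite) trace of `D`. -/
def IsTrace {P S : Type} (D : DynDom P S) (τ : ℕ → S) (n : ℕ) : Prop :=
  τ 0 = D.init ∧ ∀ i, i < n → D.δ (τ i) (τ (i + 1))

def IsInfTrace {P S : Type} (D : DynDom P S) (τ : ℕ → S) : Prop :=
  τ 0 = D.init ∧ ∀ i, D.δ (τ i) (τ (i + 1))

/-- The prefix `τ 0 … τ j` as a list. -/
def pref {S : Type} (τ : ℕ → S) (j : ℕ) : List S := (List.range (j + 1)).map τ

/-- The trace induced by a strategy `σ : S⁺ → T` on a trace of the `A`-domain. -/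
def induced {S T : Type} (σ : List S → T) (τ : ℕ → S) : ℕ → T := fun i => σ (pref τ i)

def Executable {PA PB S T : Type} (DA : DynDom PA S) (DB : DynDom PB T)
    (σ : List S → T) : Prop :=
  σ [DA.init] = DB.init ∧ ∀ τ n, IsTrace DA τ n → IsTrace DB (induced σ τ) n

/-- Joint label of a pair of label sets, over the disjoint union of the propositions. -/
def jset {PA PB : Type} (XA : Set PA) (XB : Set PB) : Set (PA ⊕ PB) :=
  Sum.inl '' XA ∪ Sum.inr '' XB

/-- Joint trace label of two (equally long) traces. -/
def jointLabel {PA PB S T : Type} (lA : S → Set PA) (lB : T → Set PB)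
    (τ : ℕ → S) (τ' : ℕ → T) : ℕ → Set (PA ⊕ PB) :=
  fun i => jset (lA (τ i)) (lB (τ' i))

/-- Solution when the stop agent is `A`. -/
def IsSolutionA {PA PB S T : Type} (DA : DynDom PA S) (DB : DynDom PB T)
    (Φ : LTLf (PA ⊕ PB)) (σ : List S → T) : Prop :=
  Executable DA DB σ ∧ ∀ τ n, IsTrace DA τ n →
    LTLf.sat (jointLabel DA.label DB.label τ (induced σ τ)) n 0 Φ

/-- Solution when the stop agent is `B`. -/
def IsSolutionB {PA PB S T : Type} (DA : DynDom PA S) (DB : DynDom PB T)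
    (Φ : LTLf (PA ⊕ PB)) (σ : List S → T) : Prop :=
  Executable DA DB σ ∧ ∀ τ, IsInfTrace DA τ → ∃ n,
    LTLf.sat (jointLabel DA.label DB.label τ (induced σ τ)) n 0 Φ

/-! ### Two-player games -/

structure Arena (N : Type) where
  u0 : N
  alpha : N → N → Prop
  beta : N → N → Prop

def IsPrePlay {N : Type} (A : Arena N) (ρ : ℕ → N) (n : ℕ) : Prop :=
  ρ 0 = A.u0 ∧ ∀ i, i < n →
    (Even i → A.alpha (ρ i) (ρ (i + 1))) ∧ (¬ Even i → A.beta (ρ i) (ρ (i + 1)))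

/-- A play `ρ 0 … ρ n` (with `n` even, ending in a `P1` node). -/
def IsPlay {N : Type} (A : Arena N) (ρ : ℕ → N) (n : ℕ) : Prop :=
  Even n ∧ IsPrePlay A ρ n

/-- The `P2` (V-) nodes of the prefix `ρ 0 … ρ i`, i.e. `ρ 1, ρ 3, …`. -/
def vlist {N : Type} (ρ : ℕ → N) (i : ℕ) : List N :=
  (List.range ((i + 1) / 2)).map fun j => ρ (2 * j + 1)

def Compatible {N : Type} (A : Arena N) (σ' : List N → N) (ρ : ℕ → N) (n : ℕ) : Prop :=
  ∀ i, i < n → ¬ Even i → ρ (i + 1) = σ' (vlist ρ i)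

/-- A `P2` strategy only prescribes legal moves (along plays compatible with it). -/
def StratLegal {N : Type} (A : Arena N) (σ' : List N → N) : Prop :=
  ∀ ρ n, ¬ Even n → IsPrePlay A ρ n → Compatible A σ' ρ n →
    A.beta (ρ n) (σ' (vlist ρ n))

def IsInfPlay {N : Type} (A : Arena N) (ρ : ℕ → N) : Prop :=
  ρ 0 = A.u0 ∧ ∀ i,
    (Even i → A.alpha (ρ i) (ρ (i + 1))) ∧ (¬ Even i → A.beta (ρ i) (ρ (i + 1)))

def CompatibleInf {N : Type} (A : Arena N) (σ' : List N → N) (ρ : ℕ → N) : Prop :=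
  ∀ i, ¬ Even i → ρ (i + 1) = σ' (vlist ρ i)

/-- Winning strategy for the safety objective `Safe(g)`. -/
def WinningSafe {N : Type} (A : Arena N) (g : Set N) (σ' : List N → N) : Prop :=
  StratLegal A σ' ∧ ∀ ρ n, IsPlay A ρ n → Compatible A σ' ρ n →
    ∀ j, j ≤ n → Even j → ρ j ∈ g

/-- Winning strategy for the reachability objective `Reach(g)`:
no matter how `P1` keeps moving, a goal node is eventually reached. -/
def WinningReach {N : Type} (A : Arena N) (g : Set N) (σ' : List N → N) : Prop :=
  StratLegal A σ' ∧ ∀ ρ, IsInfPlay A ρ → CompatibleInf A σ' ρ →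
    ∃ j, Even j ∧ ρ j ∈ g

/-! ### The product arena of the two domains -/

def prodArena {PA PB S T : Type} (DA : DynDom PA S) (DB : DynDom PB T) :
    Arena (S × T) where
  u0 := (DA.init, DB.init)
  alpha := fun u v => DA.δ u.1 v.1 ∧ v.2 = u.2
  beta := fun v u => u.1 = v.1 ∧ DB.δ v.2 u.2

/-! ### Mapping specifications -/

/-- Point-wise mapping specification `⋀_{i} □(φ_i → ψ_i)`. -/
def pointwiseSpec {PA PB : Type} {k : ℕ} (φ : Fin k → BForm PA) (ψ : Fin k → BForm PB) :
    LTLf (PA ⊕ PB) :=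
  LTLf.iconj fun i =>
    LTLf.always (LTLf.imp ((φ i).map Sum.inl).toLTLf ((ψ i).map Sum.inr).toLTLf)

/-- Target mapping specification `⋀_{i} (◇φ_i → ◇ψ_i)`. -/
def targetSpec {PA PB : Type} {k : ℕ} (φ : Fin k → BForm PA) (ψ : Fin k → BForm PB) :
    LTLf (PA ⊕ PB) :=
  LTLf.iconj fun i =>
    LTLf.imp (LTLf.ev ((φ i).map Sum.inl).toLTLf) (LTLf.ev ((ψ i).map Sum.inr).toLTLf)

/-! ### The memory-augmented arena for target mappings -/

def memArena {PA PB S T : Type} {k : ℕ} (DA : DynDom PA S) (DB : DynDom PB T)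
    (φ : Fin k → BForm PA) (ψ : Fin k → BForm PB) :
    Arena (S × T × (Fin k → Prop × Prop)) where
  u0 := (DA.init, DB.init,
    fun i => ((φ i).sat (DA.label DA.init), (ψ i).sat (DB.label DB.init)))
  alpha := fun u v => DA.δ u.1 v.1 ∧ v.2.1 = u.2.1 ∧
    v.2.2 = fun i => ((φ i).sat (DA.label v.1) ∨ (u.2.2 i).1, (u.2.2 i).2)
  beta := fun v u => u.1 = v.1 ∧ DB.δ v.2.1 u.2.1 ∧
    u.2.2 = fun i => ((v.2.2 i).1, (ψ i).sat (DB.label u.2.1) ∨ (v.2.2 i).2)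

/-- `g`: for every `i`, `c_i = 0` or `d_i = 1`. -/
def memGoal {S T : Type} {k : ℕ} : Set (S × T × (Fin k → Prop × Prop)) :=
  {u | ∀ i, (u.2.2 i).1 → (u.2.2 i).2}

/-! ### The DFA-product arena for general LTLf mappings -/

/-- The word `π 0 … π n` as a list. -/
def wordOf {P : Type} (π : ℕ → Set P) (n : ℕ) : List (Set P) := (List.range (n + 1)).map π

def dfaArena {PA PB S T Q : Type} (DA : DynDom PA S) (DB : DynDom PB T)
    (F : DFA (Set (PA ⊕ PB)) Q) : Arena (S × T × Q) where
  u0 := (DA.init, DB.init, F.step F.start (jset (DA.label DA.init) (DB.label DB.init)))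
  alpha := fun u v => DA.δ u.1 v.1 ∧ v.2.1 = u.2.1 ∧ v.2.2 = u.2.2
  beta := fun v u => u.1 = v.1 ∧ DB.δ v.2.1 u.2.1 ∧
    u.2.2 = F.step v.2.2 (jset (DA.label v.1) (DB.label u.2.1))

def dfaGoal {S T α Q : Type} (F : DFA α Q) : Set (S × T × Q) :=
  {u | u.2.2 ∈ F.accept}

/-! The product arena is the synchronous product of the two domains with the DFA run on
their joint label: along any play, the `D_A`- and `D_B`-components form traces, and the DFA
component of the `U`-node after round `j` is the state reached on the joint word of the first
`j + 1` steps. Hence a strategy `σ` of agent `B` lifts to a Player 2 strategy answering with `σ`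
on the `D_A`-trace read off the play, and a Player 2 strategy `σ'` projects to a strategy of `B`
by simulating the play along the given `D_A`-trace. In both directions reaching an accepting
DFA state is exactly satisfying `Φ` on the corresponding prefix. -/

section Plays

variable {N : Type} {A : Arena N} {ρ : ℕ → N} {n : ℕ}

theorem IsPrePlay.mono (h : IsPrePlay A ρ n) {m : ℕ} (hm : m ≤ n) : IsPrePlay A ρ m :=
  ⟨h.1, fun i hi => h.2 i (by omega)⟩

theorem IsPrePlay.alpha (h : IsPrePlay A ρ n) {j : ℕ} (hj : 2 * j < n) :
    A.alpha (ρ (2 * j)) (ρ (2 * j + 1)) :=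
  (h.2 _ hj).1 (even_two_mul j)

theorem IsPrePlay.beta (h : IsPrePlay A ρ n) {j : ℕ} (hj : 2 * j + 1 < n) :
    A.beta (ρ (2 * j + 1)) (ρ (2 * j + 2)) :=
  (h.2 _ hj).2 (Nat.not_even_two_mul_add_one j)

theorem IsPrePlay.succ_of_alpha {j : ℕ} (h : IsPrePlay A ρ (2 * j))
    (ha : A.alpha (ρ (2 * j)) (ρ (2 * j + 1))) : IsPrePlay A ρ (2 * j + 1) := by
  refine ⟨h.1, fun i hi => ?_⟩
  obtain hi | rfl : i < 2 * j ∨ i = 2 * j := by omega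
  · exact h.2 i hi
  · exact ⟨fun _ => ha, fun hodd => absurd (even_two_mul j) hodd⟩

theorem IsPrePlay.succ_of_beta {j : ℕ} (h : IsPrePlay A ρ (2 * j + 1))
    (hb : A.beta (ρ (2 * j + 1)) (ρ (2 * j + 2))) : IsPrePlay A ρ (2 * j + 2) := by
  refine ⟨h.1, fun i hi => ?_⟩
  obtain hi | rfl : i < 2 * j + 1 ∨ i = 2 * j + 1 := by omega
  · exact h.2 i hi
  · exact ⟨fun heven => absurd heven (Nat.not_even_two_mul_add_one j), fun _ => hb⟩

theorem IsInfPlay.isPrePlay (h : IsInfPlay A ρ) (n : ℕ) : IsPrePlay A ρ n :=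
  ⟨h.1, fun i _ => h.2 i⟩

theorem isInfPlay_of_forall_isPrePlay (h : ∀ n, IsPrePlay A ρ n) : IsInfPlay A ρ :=
  ⟨(h 0).1, fun i => (h (i + 1)).2 i i.lt_succ_self⟩

theorem vlist_two_mul_add_one (ρ : ℕ → N) (m : ℕ) :
    vlist ρ (2 * m + 1) = (List.range (m + 1)).map fun j => ρ (2 * j + 1) := by
  rw [vlist, show (2 * m + 1 + 1) / 2 = m + 1 by omega]

theorem vlist_two_mul_add_three (ρ : ℕ → N) (m : ℕ) :
    vlist ρ (2 * m + 3) = vlist ρ (2 * m + 1) ++ [ρ (2 * m + 3)] := by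
  rw [show 2 * m + 3 = 2 * (m + 1) + 1 by omega, vlist_two_mul_add_one,
    vlist_two_mul_add_one, List.range_succ, List.map_append]
  rfl

theorem getLastD_vlist (ρ : ℕ → N) (m : ℕ) (d : N) :
    (vlist ρ (2 * m + 1)).getLastD d = ρ (2 * m + 1) := by
  simp [vlist_two_mul_add_one, List.range_succ]

end Plays

theorem pref_succ {S : Type} (τ : ℕ → S) (m : ℕ) :
    pref τ (m + 1) = pref τ m ++ [τ (m + 1)] := by
  simp [pref, List.range_succ]

theorem DFA.eval_wordOf_zero {P Q : Type} (F : DFA (Set P) Q) (π : ℕ → Set P) :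
    F.eval (wordOf π 0) = F.step F.start (π 0) := by
  simp [wordOf, DFA.eval, DFA.evalFrom]

theorem DFA.eval_wordOf_succ {P Q : Type} (F : DFA (Set P) Q) (π : ℕ → Set P) (m : ℕ) :
    F.eval (wordOf π (m + 1)) = F.step (F.eval (wordOf π m)) (π (m + 1)) := by
  simp [wordOf, List.range_succ, DFA.eval, DFA.evalFrom]

namespace dfaArena

variable {PA PB S T Q : Type} {DA : DynDom PA S} {DB : DynDom PB T}
  {F : DFA (Set (PA ⊕ PB)) Q} {ρ : ℕ → S × T × Q} {n : ℕ}

/-- `D_A` moves along the `α`-edges `2 j → 2 j + 1`, so its state after `j + 1` steps is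
read at node `2 j + 1`. -/
def traceA (ρ : ℕ → S × T × Q) : ℕ → S
  | 0 => (ρ 0).1
  | j + 1 => (ρ (2 * j + 1)).1

def traceB (ρ : ℕ → S × T × Q) (j : ℕ) : T := (ρ (2 * j)).2.1

theorem pref_traceA (ρ : ℕ → S × T × Q) (m : ℕ) :
    pref (traceA ρ) (m + 1) = (ρ 0).1 :: (vlist ρ (2 * m + 1)).map Prod.fst := by
  simp [pref, List.range_succ_eq_map, vlist_two_mul_add_one, traceA]

theorem fst_two_mul (hρ : IsPrePlay (dfaArena DA DB F) ρ n) {j : ℕ} (hj : 2 * j ≤ n) :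
    (ρ (2 * j)).1 = traceA ρ j := by
  cases j with
  | zero => rfl
  | succ j => exact (hρ.beta (j := j) (by omega)).1

theorem snd_two_mul_add_one (hρ : IsPrePlay (dfaArena DA DB F) ρ n) {j : ℕ}
    (hj : 2 * j < n) : (ρ (2 * j + 1)).2.1 = traceB ρ j :=
  (hρ.alpha hj).2.1

theorem isTrace_traceA {m : ℕ} (hρ : IsPrePlay (dfaArena DA DB F) ρ (2 * m + 1)) :
    IsTrace DA (traceA ρ) (m + 1) := by
  refine ⟨by rw [traceA, hρ.1]; rfl, fun j hj => ?_⟩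
  rw [← fst_two_mul hρ (j := j) (by omega)]
  exact (hρ.alpha (j := j) (by omega)).1

theorem isTrace_traceB {m : ℕ} (hρ : IsPrePlay (dfaArena DA DB F) ρ (2 * m)) :
    IsTrace DB (traceB ρ) m := by
  refine ⟨by rw [traceB, hρ.1]; rfl, fun j hj => ?_⟩
  rw [← snd_two_mul_add_one hρ (j := j) (by omega)]
  exact (hρ.beta (j := j) (by omega)).2.1

theorem state_two_mul (hρ : IsPrePlay (dfaArena DA DB F) ρ n) {j : ℕ} (hj : 2 * j ≤ n) :
    (ρ (2 * j)).2.2 =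
      F.eval (wordOf (jointLabel DA.label DB.label (traceA ρ) (traceB ρ)) j) := by
  induction j with
  | zero =>
    simp only [DFA.eval_wordOf_zero, jointLabel, traceA, traceB, Nat.mul_zero, hρ.1]
    rfl
  | succ j ih =>
    obtain ⟨-, -, hq⟩ := hρ.beta (j := j) (by omega)
    rw [show 2 * (j + 1) = 2 * j + 2 by ring, DFA.eval_wordOf_succ, ← ih (by omega),
      ← (hρ.alpha (j := j) (by omega)).2.2, hq]
    rfl

variable (DA DB F) in
def liftStrategy (σ : List S → T) (l : List (S × T × Q)) : S × T × Q :=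
  let v := l.getLastD (dfaArena DA DB F).u0
  let t := σ (DA.init :: l.map Prod.fst)
  (v.1, t, F.step v.2.2 (jset (DA.label v.1) (DB.label t)))

theorem liftStrategy_vlist (σ : List S → T) (hρ : IsPrePlay (dfaArena DA DB F) ρ n)
    (m : ℕ) : liftStrategy DA DB F σ (vlist ρ (2 * m + 1)) =
      ((ρ (2 * m + 1)).1, induced σ (traceA ρ) (m + 1), F.step (ρ (2 * m + 1)).2.2
        (jset (DA.label (ρ (2 * m + 1)).1) (DB.label (induced σ (traceA ρ) (m + 1))))) := by
  have hinit : (ρ 0).1 = DA.init := by rw [hρ.1]; rfl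
  rw [liftStrategy, getLastD_vlist, induced, pref_traceA, hinit]

theorem traceB_eq_induced {σ : List S → T} (hσ : σ [DA.init] = DB.init)
    (hρ : IsPrePlay (dfaArena DA DB F) ρ n)
    (hc : Compatible (dfaArena DA DB F) (liftStrategy DA DB F σ) ρ n)
    {j : ℕ} (hj : 2 * j ≤ n) : traceB ρ j = induced σ (traceA ρ) j := by
  cases j with
  | zero =>
    show (ρ 0).2.1 = σ [(ρ 0).1]
    rw [hρ.1]
    exact hσ.symm
  | succ j =>
    rw [traceB, show 2 * (j + 1) = 2 * j + 1 + 1 by ring,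
      hc _ (by omega) (Nat.not_even_two_mul_add_one j), liftStrategy_vlist σ hρ]

theorem stratLegal_liftStrategy {σ : List S → T} (hσ : Executable DA DB σ) :
    StratLegal (dfaArena DA DB F) (liftStrategy DA DB F σ) := by
  intro ρ n hodd hρ hc
  obtain ⟨m, rfl⟩ : ∃ m, n = 2 * m + 1 :=
    ⟨n / 2, by have := Nat.not_even_iff.mp hodd; omega⟩
  rw [liftStrategy_vlist σ hρ]
  refine ⟨rfl, ?_, rfl⟩
  rw [snd_two_mul_add_one hρ (by omega), traceB_eq_induced hσ.1 hρ hc (by omega)]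
  exact (hσ.2 _ _ (isTrace_traceA hρ)).2 m m.lt_succ_self

theorem winningReach_liftStrategy {Φ : LTLf (PA ⊕ PB)} {σ : List S → T}
    (hσ : IsSolutionB DA DB Φ σ)
    (hF : ∀ π n, LTLf.sat π n 0 Φ → F.eval (wordOf π n) ∈ F.accept) :
    WinningReach (dfaArena DA DB F) (dfaGoal (S := S) (T := T) F) (liftStrategy DA DB F σ) := by
  refine ⟨stratLegal_liftStrategy hσ.1, fun ρ hρ hc => ?_⟩
  have hc' (n : ℕ) : Compatible (dfaArena DA DB F) (liftStrategy DA DB F σ) ρ n :=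
    fun i _ hi => hc i hi
  have htrace : IsInfTrace DA (traceA ρ) :=
    ⟨(isTrace_traceA (hρ.isPrePlay (2 * 0 + 1))).1,
      fun j => (isTrace_traceA (hρ.isPrePlay (2 * j + 1))).2 j j.lt_succ_self⟩
  have hB : traceB ρ = induced σ (traceA ρ) :=
    funext fun j => traceB_eq_induced hσ.1.1 (hρ.isPrePlay _) (hc' _) le_rfl
  obtain ⟨m, hsat⟩ := hσ.2 _ htrace
  refine ⟨2 * m, even_two_mul m, ?_⟩
  show (ρ (2 * m)).2.2 ∈ F.accept
  rw [state_two_mul (hρ.isPrePlay _) le_rfl, hB]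
  exact hF _ _ hsat

section Projection

variable {σ' : List (S × T × Q) → S × T × Q} {τ : ℕ → S}

/-- One round: `D_A` moves to `s`, then `σ'` answers; the second component records the
`V`-nodes played so far. -/
def respond (σ' : List (S × T × Q) → S × T × Q) (p : (S × T × Q) × List (S × T × Q))
    (s : S) : (S × T × Q) × List (S × T × Q) :=
  let vs := p.2 ++ [(s, p.1.2)]
  (σ' vs, vs)

variable (DA DB F)

/-- The game position reached when `D_A` plays `l` (its first entry is the initial state). -/
def run (σ' : List (S × T × Q) → S × T × Q) (l : List S) :
    (S × T × Q) × List (S × T × Q) :=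
  l.tail.foldl (respond σ') ((dfaArena DA DB F).u0, [])

def projStrategy (σ' : List (S × T × Q) → S × T × Q) (l : List S) : T :=
  (run DA DB F σ' l).1.2.1

/-- The play in which `D_A` follows `τ` and Player 2 follows `σ'`. -/
def playAlong (σ' : List (S × T × Q) → S × T × Q) (τ : ℕ → S) (i : ℕ) : S × T × Q :=
  if i % 2 = 0 then (run DA DB F σ' (pref τ (i / 2))).1
  else (τ (i / 2 + 1), (run DA DB F σ' (pref τ (i / 2))).1.2)

variable {DA DB F}

theorem run_pref_succ (m : ℕ) :
    run DA DB F σ' (pref τ (m + 1)) = respond σ' (run DA DB F σ' (pref τ m)) (τ (m + 1)) := by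
  rw [run, run, pref_succ, List.tail_append_of_ne_nil (by simp [pref]), List.foldl_append]
  rfl

theorem playAlong_two_mul (j : ℕ) :
    playAlong DA DB F σ' τ (2 * j) = (run DA DB F σ' (pref τ j)).1 := by
  simp [playAlong]

theorem playAlong_two_mul_add_one (j : ℕ) :
    playAlong DA DB F σ' τ (2 * j + 1) = (τ (j + 1), (playAlong DA DB F σ' τ (2 * j)).2) := by
  rw [playAlong_two_mul, playAlong, if_neg (by omega), show (2 * j + 1) / 2 = j by omega]

theorem snd_run_pref_succ (m : ℕ) :
    (run DA DB F σ' (pref τ (m + 1))).2 = vlist (playAlong DA DB F σ' τ) (2 * m + 1) := by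
  induction m with
  | zero => rfl
  | succ m ih =>
    rw [run_pref_succ, show 2 * (m + 1) + 1 = 2 * m + 3 by ring, vlist_two_mul_add_three, ← ih,
      show 2 * m + 3 = 2 * (m + 1) + 1 by ring, playAlong_two_mul_add_one, playAlong_two_mul]
    rfl

theorem compatibleInf_playAlong :
    CompatibleInf (dfaArena DA DB F) σ' (playAlong DA DB F σ' τ) := by
  intro i hi
  obtain ⟨j, rfl⟩ : ∃ j, i = 2 * j + 1 :=
    ⟨i / 2, by have := Nat.not_even_iff.mp hi; omega⟩
  rw [← snd_run_pref_succ, show 2 * j + 1 + 1 = 2 * (j + 1) by ring, playAlong_two_mul,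
    run_pref_succ]
  rfl

theorem traceA_playAlong (hτ : τ 0 = DA.init) : traceA (playAlong DA DB F σ' τ) = τ := by
  funext j
  cases j with
  | zero => exact hτ.symm
  | succ j => simp only [traceA, playAlong_two_mul_add_one]

theorem traceB_playAlong :
    traceB (playAlong DA DB F σ' τ) = induced (projStrategy DA DB F σ') τ :=
  funext fun j => by rw [traceB, playAlong_two_mul]; rfl

theorem isPrePlay_playAlong (hσ' : StratLegal (dfaArena DA DB F) σ') {m : ℕ}
    (hτ : IsTrace DA τ m) : IsPrePlay (dfaArena DA DB F) (playAlong DA DB F σ' τ) (2 * m) := by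
  induction m with
  | zero => exact ⟨rfl, fun i hi => by omega⟩
  | succ m ih =>
    have hρ := ih ⟨hτ.1, fun i hi => hτ.2 i (by omega)⟩
    have hfst : (playAlong DA DB F σ' τ (2 * m)).1 = τ m := by
      rw [fst_two_mul hρ le_rfl, traceA_playAlong hτ.1]
    have hρ' := hρ.succ_of_alpha <| by
      rw [playAlong_two_mul_add_one]
      exact ⟨hfst ▸ hτ.2 m m.lt_succ_self, rfl, rfl⟩
    have hb := hσ' _ _ (Nat.not_even_two_mul_add_one m) hρ'
      (fun i _ hi => compatibleInf_playAlong i hi)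
    rw [← compatibleInf_playAlong (F := F) (σ' := σ') (τ := τ) _
      (Nat.not_even_two_mul_add_one m)] at hb
    exact hρ'.succ_of_beta hb

theorem isSolutionB_projStrategy {Φ : LTLf (PA ⊕ PB)}
    (hσ' : WinningReach (dfaArena DA DB F) (dfaGoal (S := S) (T := T) F) σ')
    (hF : ∀ π n, F.eval (wordOf π n) ∈ F.accept → LTLf.sat π n 0 Φ) :
    IsSolutionB DA DB Φ (projStrategy DA DB F σ') := by
  refine ⟨⟨rfl, fun τ m hτ => ?_⟩, fun τ hτ => ?_⟩
  · rw [← traceB_playAlong (σ' := σ')]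
    exact isTrace_traceB (isPrePlay_playAlong hσ'.1 hτ)
  · have hρ := isInfPlay_of_forall_isPrePlay fun n =>
      (isPrePlay_playAlong hσ'.1 (m := n) ⟨hτ.1, fun i _ => hτ.2 i⟩).mono (by omega)
    obtain ⟨j, ⟨m, rfl⟩, hgoal⟩ := hσ'.2 _ hρ compatibleInf_playAlong
    rw [← two_mul] at hgoal
    have hstate := state_two_mul (hρ.isPrePlay _) (j := m) le_rfl
    rw [traceA_playAlong hτ.1, traceB_playAlong] at hstate
    exact ⟨m, hF _ _ (hstate ▸ hgoal)⟩

end Projection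

end dfaArena

theorem mbsd_general_stopB_iff_reachability_game_general
    {PA PB S T Q : Type}
    (DA : DynDom PA S) (DB : DynDom PB T)
    (Φ : LTLf (PA ⊕ PB)) (F : DFA (Set (PA ⊕ PB)) Q)
    (hF : ∀ (π : ℕ → Set (PA ⊕ PB)) (n : ℕ),
      F.eval (wordOf π n) ∈ F.accept ↔ LTLf.sat π n 0 Φ) :
    (∃ σ : List S → T, IsSolutionB DA DB Φ σ) ↔
      (∃ σ' : List (S × T × Q) → S × T × Q,
        WinningReach (dfaArena DA DB F) (dfaGoal (S := S) (T := T) F) σ') :=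
  ⟨fun ⟨_, hσ⟩ => ⟨_, dfaArena.winningReach_liftStrategy hσ fun π n => (hF π n).mpr⟩,
    fun ⟨_, hσ'⟩ => ⟨_, dfaArena.isSolutionB_projStrategy hσ' fun π n => (hF π n).mp⟩⟩

/-- for an arbitrary LTLf mapping specification `Φ` and stop agent `B`,
given a DFA `F` accepting exactly the finite nonempty words satisfying `Φ`, the MBSD
instance has a solution iff Player 2 has a winning strategy in the reachability game on
the product arena with the DFA. -/
theorem mbsd_general_stopB_iff_reachability_game
    {PA PB S T Q : Type} [Fintype PA] [Fintype PB] [Fintype S] [Fintype T] [Fintype Q]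
    (DA : DynDom PA S) (DB : DynDom PB T)
    (hserA : ∀ s, ∃ s', DA.δ s s') (hserB : ∀ t, ∃ t', DB.δ t t')
    (Φ : LTLf (PA ⊕ PB)) (F : DFA (Set (PA ⊕ PB)) Q)
    (hF : ∀ (π : ℕ → Set (PA ⊕ PB)) (n : ℕ),
      F.eval (wordOf π n) ∈ F.accept ↔ LTLf.sat π n 0 Φ) :
    (∃ σ : List S → T, IsSolutionB DA DB Φ σ) ↔
      (∃ σ' : List (S × T × Q) → S × T × Q,
        WinningReach (dfaArena DA DB F) (dfaGoal (S := S) (T := T) F) σ') :=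
  mbsd_general_stopB_iff_reachability_game_general DA DB Φ F hF
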